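/- Let a ∈ A, let d := |R⁺_a| ∈ ℕ ∪ {∞}, let m ∈ ℕ₀ with m < d, let (i_1, …, i_m) ∈ N^m, let w be the σ-composite of the word (i_1, …, i_m) at a, and let b := i_1⋯i_m ▷ a be its target. If w(α_{i,a}) ∈ −R⁺_b, then w(α_{j,a}) ∈ R⁺_b. -/

import Mathlib

open Pointwise

variable {N : Type*} {A : Type*}

/-- The element `(i j)^m ▷ a` for the action of `F₂(N)` on `A`. -/
def altIter (act : N → A → A) (i j : N) (a : A) : ℕ → A
  | 0 => a
  | m + 1 => act i (act j (altIter act i j a m))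

/-- The set `Θ(i,j;a)`. -/
def ThetaSet (act : N → A → A) (i j : N) (a : A) : Set A :=
  {x | ∃ m : ℕ, x = altIter act i j a m ∨ x = altIter act j i a m}

/-- The set of `ℕ₀`-linear combinations of elements of `s`. -/
def NSpan (s : Set (N →₀ ℝ)) : Set (N →₀ ℝ) :=
  (AddSubmonoid.closure s : Set (N →₀ ℝ))

/-- A generalized root system: a transitive action of `F₂(N)` on `A` (axiom (1)),
roots `root a ⊆ ℝ^{(N)}` with simple roots `α n a` forming a basis (axiom (2)),
and maps `σ i a ∈ GL(ℝ^{(N)})`, satisfying axioms (3)-(7). -/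
structure GRS (N : Type*) (A : Type*) where
  act : N → A → A
  act_invol : ∀ n a, act n (act n a) = a
  act_trans : ∀ a b : A, ∃ l : List N, l.foldr act a = b
  root : A → Set (N →₀ ℝ)
  α : N → A → N →₀ ℝ
  α_mem : ∀ n a, α n a ∈ root a
  α_indep : ∀ a, LinearIndependent ℝ fun n => α n a
  α_span : ∀ a, Submodule.span ℝ (Set.range fun n => α n a) = ⊤
  σ : N → A → (N →₀ ℝ) ≃ₗ[ℝ] (N →₀ ℝ)
  ax3 : ∀ a, root a =
    root a ∩ NSpan (Set.range fun n => α n a) ∪ -(root a ∩ NSpan (Set.range fun n => α n a))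
  ax4 : ∀ i a, (Set.range fun r : ℝ => r • α i a) ∩ root a = {α i a, -α i a}
  ax5_root : ∀ i a, ⇑(σ i a) '' root a = root (act i a)
  ax5_diag : ∀ i a, σ i a (α i a) = -α i (act i a)
  ax5_off : ∀ i a j, j ≠ i →
    ∃ m : ℕ, σ i a (α j a) = α j (act i a) + (m : ℝ) • α i (act i a)
  ax6 : ∀ i a v, σ i (act i a) (σ i a v) = v
  ax7 : ∀ a (i j : N), i ≠ j →
    (root a ∩ {β | ∃ p q : ℕ, β = (p : ℝ) • α i a + (q : ℝ) • α j a}).Finite →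
    (ThetaSet act i j a).Finite ∧
      (ThetaSet act i j a).ncard ∣
        (root a ∩ {β | ∃ p q : ℕ, β = (p : ℝ) • α i a + (q : ℝ) • α j a}).ncard

/-- The positive roots `R⁺_a`. -/
def GRS.pos (G : GRS N A) (a : A) : Set (N →₀ ℝ) :=
  G.root a ∩ NSpan (Set.range fun n => G.α n a)

/-- The target `i₁ ⋯ i_m ▷ a` of the word `(i₁, …, i_m)` at `a`. -/
def GRS.target (G : GRS N A) (l : List N) (a : A) : A :=
  l.foldr G.act a

/-- The σ-composite `σ_{i₁,b₁} ∘ ⋯ ∘ σ_{i_m,b_m}` of the word `(i₁, …, i_m)` at `a`. -/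
noncomputable def GRS.wmap (G : GRS N A) : List N → A → (N →₀ ℝ) ≃ₗ[ℝ] (N →₀ ℝ)
  | [], _ => LinearEquiv.refl ℝ _
  | i :: l, a => (G.wmap l a).trans (G.σ i (G.target l a))

/-- The length `ℓ` of a word at `a`: the minimal length of a word at `a`
with the same target and the same σ-composite. -/
noncomputable def GRS.len (G : GRS N A) (l : List N) (a : A) : ℕ :=
  sInf {m | ∃ l' : List N, l'.length = m ∧
    G.target l' a = G.target l a ∧ G.wmap l' a = G.wmap l a}

/-- A word of length `m` at `a` is reduced if `ℓ = m`. -/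
def GRS.Reduced (G : GRS N A) (l : List N) (a : A) : Prop :=
  G.len l a = l.length

/-- `m_{i,j;a} = |R_a ∩ (ℕ₀ α_{i,a} + ℕ₀ α_{j,a})|`. -/
noncomputable def GRS.mij (G : GRS N A) (i j : N) (a : A) : ℕ :=
  (G.root a ∩ {β | ∃ p q : ℕ, β = (p : ℝ) • G.α i a + (q : ℝ) • G.α j a}).ncard

/-- The alternating word `(i₁, …, i_m)` with `i_k = i` for `k` odd (leftmost letter `i`). -/
def altList (i j : N) : ℕ → List N
  | 0 => []
  | m + 1 => i :: altList j i m

/-- The alternating word of length `m` in the letters `i,j` whose rightmost letter is `i`. -/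
def altR (i j : N) : ℕ → List N
  | 0 => []
  | m + 1 => altR j i m ++ [i]

/-- `a_m = i_m ⋯ i_1 ▷ a` for the alternating sequence with `i_k = i` for odd `k`. -/
def aIter (act : N → A → A) (i j : N) (a : A) : ℕ → A
  | 0 => a
  | m + 1 => act (if m % 2 = 0 then i else j) (aIter act i j a m)

/-- The set of real roots `R^{re}_a`. -/
def GRS.reroot (G : GRS N A) (a : A) : Set (N →₀ ℝ) :=
  {β | ∃ (b : A) (l : List N) (n : N), G.target l b = a ∧ β = G.wmap l b (G.α n b)}

/-- The word `C(i,j;a)`: alternating of length `m_{i,j;a} - 1` with leftmost letter `i`. -/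
noncomputable def GRS.Cword (G : GRS N A) (i j : N) (a : A) : List N :=
  altList i j (G.mij i j a - 1)

/-!
Call a positive root `β ∈ R⁺_a` an inversion of a word if its σ-composite `w` sends `β` to a
negative root. A positive root `β ≠ α_{i,a}` has a positive coordinate at some `k ≠ i`, which
`σ_{i,a}` does not change, so `σ_{i,a}` maps `R⁺_a \ {α_{i,a}}` into `R⁺_{i▷a}`; hence adding
a letter to a word adds at most one inversion, and a word of length `m` has at most `m`
inversions. On the other hand, if `w` sends every simple root to a `−ℕ₀`-combination of simple
roots, then by additivity it does so with every positive root, i.e. all of `R⁺_a` are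
inversions. In rank two, `w(α_{i,a}) ∈ −R⁺_b` together with `w(α_{j,a}) ∉ R⁺_b` would therefore
force `|R⁺_a| ≤ m`.
-/

namespace GRS

variable (G : GRS N A)

noncomputable def basis (a : A) : Module.Basis N ℝ (N →₀ ℝ) :=
  Module.Basis.mk (G.α_indep a) (G.α_span a).ge

@[simp]
lemma basis_apply (a : A) (n : N) : G.basis a n = G.α n a :=
  Module.Basis.mk_apply _ _ _

lemma repr_α (n : N) (a : A) : (G.basis a).repr (G.α n a) = Finsupp.single n 1 := by
  rw [← G.basis_apply, Module.Basis.repr_self]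

lemma α_mem_nspan (n : N) (a : A) : G.α n a ∈ NSpan (Set.range fun k => G.α k a) :=
  AddSubmonoid.subset_closure ⟨n, rfl⟩

lemma repr_nonneg_of_mem_nspan {a : A} {β : N →₀ ℝ}
    (hβ : β ∈ NSpan (Set.range fun n => G.α n a)) (k : N) : 0 ≤ (G.basis a).repr β k := by
  induction hβ using AddSubmonoid.closure_induction with
  | mem x hx =>
    obtain ⟨n, rfl⟩ := hx
    show 0 ≤ (G.basis a).repr (G.α n a) k
    rw [G.repr_α]
    exact Finsupp.single_nonneg.2 zero_le_one k
  | zero => simp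
  | add x y _ _ hx hy =>
    rw [map_add, Finsupp.add_apply]
    exact add_nonneg hx hy

lemma eq_zero_of_mem_nspan_of_neg_mem_nspan {a : A} {β : N →₀ ℝ}
    (hβ : β ∈ NSpan (Set.range fun n => G.α n a))
    (hβ' : -β ∈ NSpan (Set.range fun n => G.α n a)) : β = 0 := by
  refine (G.basis a).repr.injective (Finsupp.ext fun k => ?_)
  have h := G.repr_nonneg_of_mem_nspan hβ' k
  rw [map_neg, Finsupp.neg_apply] at h
  simpa using le_antisymm (neg_nonneg.1 h) (G.repr_nonneg_of_mem_nspan hβ k)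

lemma zero_notMem_root [Nonempty N] (a : A) : (0 : N →₀ ℝ) ∉ G.root a := by
  intro h0
  obtain ⟨n⟩ := ‹Nonempty N›
  have h : (0 : N →₀ ℝ) ∈ (Set.range fun r : ℝ => r • G.α n a) ∩ G.root a :=
    ⟨⟨0, zero_smul ℝ _⟩, h0⟩
  rw [G.ax4, Set.mem_insert_iff, Set.mem_singleton_iff, eq_comm, zero_eq_neg, or_self] at h
  exact (G.α_indep a).ne_zero n h

lemma notMem_neg_pos [Nonempty N] {a : A} {β : N →₀ ℝ} (hβ : β ∈ G.pos a) : β ∉ -G.pos a :=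
  fun hβ' => G.zero_notMem_root a <|
    G.eq_zero_of_mem_nspan_of_neg_mem_nspan hβ.2 (Set.mem_neg.1 hβ').2 ▸ hβ.1

lemma mem_pos_or_mem_neg_pos {a : A} {β : N →₀ ℝ} (hβ : β ∈ G.root a) :
    β ∈ G.pos a ∨ β ∈ -G.pos a := by
  rwa [G.ax3 a] at hβ

lemma σ_mem_root (n : N) {a : A} {β : N →₀ ℝ} (hβ : β ∈ G.root a) :
    G.σ n a β ∈ G.root (G.act n a) :=
  G.ax5_root n a ▸ Set.mem_image_of_mem _ hβ

lemma wmap_mem_root (l : List N) {a : A} {β : N →₀ ℝ} (hβ : β ∈ G.root a) :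
    G.wmap l a β ∈ G.root (G.target l a) := by
  induction l with
  | nil => exact hβ
  | cons n l ih => exact G.σ_mem_root n ih

lemma repr_σ_of_ne {i k : N} (hk : k ≠ i) (a : A) (v : N →₀ ℝ) :
    (G.basis (G.act i a)).repr (G.σ i a v) k = (G.basis a).repr v k := by
  suffices h : (Finsupp.lapply k).comp
      ((G.basis (G.act i a)).repr.toLinearMap.comp (G.σ i a).toLinearMap) =
        (Finsupp.lapply k).comp (G.basis a).repr.toLinearMap from
    LinearMap.congr_fun h v
  refine (G.basis a).ext fun n => ?_
  simp only [LinearMap.comp_apply, LinearEquiv.coe_coe, Finsupp.lapply_apply, basis_apply]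
  by_cases hn : n = i
  · subst hn
    rw [G.ax5_diag, map_neg, repr_α, repr_α, Finsupp.neg_apply, Finsupp.single_eq_of_ne hk,
      neg_zero]
  · obtain ⟨m, hm⟩ := G.ax5_off i a n hn
    rw [hm, map_add, map_smul, repr_α, repr_α, repr_α, Finsupp.add_apply, Finsupp.smul_apply,
      Finsupp.single_eq_of_ne hk, smul_zero, add_zero]

lemma σ_mem_pos [Nonempty N] {i : N} {a : A} {β : N →₀ ℝ} (hβ : β ∈ G.pos a)
    (hne : β ≠ G.α i a) : G.σ i a β ∈ G.pos (G.act i a) := by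
  obtain ⟨k, hki, hk⟩ : ∃ k ≠ i, 0 < (G.basis a).repr β k := by
    by_contra! h
    have hmult : (G.basis a).repr β i • G.α i a = β := by
      refine (G.basis a).repr.injective (Finsupp.ext fun k => ?_)
      rw [map_smul, G.repr_α, Finsupp.smul_apply]
      by_cases hki : k = i
      · subst hki
        simp
      · rw [Finsupp.single_eq_of_ne hki, smul_zero]
        exact le_antisymm (G.repr_nonneg_of_mem_nspan hβ.2 k) (h k hki)
    have hline : β ∈ (Set.range fun r : ℝ => r • G.α i a) ∩ G.root a := ⟨⟨_, hmult⟩, hβ.1⟩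
    rw [G.ax4, Set.mem_insert_iff, Set.mem_singleton_iff] at hline
    refine hline.elim hne fun hneg => G.notMem_neg_pos hβ ?_
    rw [hneg]
    exact Set.neg_mem_neg.2 ⟨G.α_mem i a, G.α_mem_nspan i a⟩
  rcases G.mem_pos_or_mem_neg_pos (G.σ_mem_root i hβ.1) with h | h
  · exact h
  · have h' := G.repr_nonneg_of_mem_nspan (Set.mem_neg.1 h).2 k
    rw [map_neg, Finsupp.neg_apply, G.repr_σ_of_ne hki] at h'
    linarith

def inversions (l : List N) (a : A) : Set (N →₀ ℝ) :=
  {β ∈ G.pos a | G.wmap l a β ∈ -G.pos (G.target l a)}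

lemma inversions_cons_subset [Nonempty N] (n : N) (l : List N) (a : A) :
    G.inversions (n :: l) a ⊆
      insert ((G.wmap l a).symm (G.α n (G.target l a))) (G.inversions l a) := by
  rintro β ⟨hβ, hw⟩
  rcases G.mem_pos_or_mem_neg_pos (G.wmap_mem_root l hβ.1) with hpos | hneg
  · left
    by_contra hne
    rw [LinearEquiv.eq_symm_apply] at hne
    exact G.notMem_neg_pos (G.σ_mem_pos hpos hne) hw
  · exact Or.inr ⟨hβ, hneg⟩

lemma encard_inversions_le [Nonempty N] (l : List N) (a : A) :
    (G.inversions l a).encard ≤ l.length := by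
  induction l with
  | nil =>
    have h : G.inversions [] a = ∅ :=
      Set.eq_empty_of_forall_notMem fun β hβ => G.notMem_neg_pos hβ.1 hβ.2
    simp [h]
  | cons n l ih =>
    calc (G.inversions (n :: l) a).encard
        ≤ (insert ((G.wmap l a).symm (G.α n (G.target l a))) (G.inversions l a)).encard :=
          Set.encard_mono (G.inversions_cons_subset n l a)
      _ ≤ (G.inversions l a).encard + 1 := Set.encard_insert_le _ _
      _ ≤ (n :: l).length := by
          rw [List.length_cons, Nat.cast_succ]
          gcongr

lemma pos_subset_inversions [Nonempty N] {l : List N} {a : A}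
    (h : ∀ n, G.wmap l a (G.α n a) ∈ -G.pos (G.target l a)) : G.pos a ⊆ G.inversions l a := by
  intro β hβ
  refine ⟨hβ, ?_⟩
  have hle : AddSubmonoid.closure (Set.range fun n => G.α n a) ≤
      (AddSubmonoid.closure (Set.range fun n => G.α n (G.target l a))).comap
        (-(G.wmap l a).toLinearMap).toAddMonoidHom := by
    rw [AddSubmonoid.closure_le]
    rintro _ ⟨n, rfl⟩
    exact (Set.mem_neg.1 (h n)).2
  have hneg : -G.wmap l a β ∈ NSpan (Set.range fun n => G.α n (G.target l a)) := hle hβ.2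
  rcases G.mem_pos_or_mem_neg_pos (G.wmap_mem_root l hβ.1) with hpos | hpos
  · exact absurd (G.eq_zero_of_mem_nspan_of_neg_mem_nspan hpos.2 hneg ▸ hpos.1)
      (G.zero_notMem_root _)
  · exact hpos

end GRS

theorem stmt4_general (G : GRS N A) (i j : N)
    (hN : ∀ n : N, n = i ∨ n = j) (a : A) (l : List N)
    (hm : (l.length : ℕ∞) < (G.pos a).encard)
    (hw : G.wmap l a (G.α i a) ∈ -G.pos (G.target l a)) :
    G.wmap l a (G.α j a) ∈ G.pos (G.target l a) := by
  have : Nonempty N := ⟨i⟩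
  by_contra hj
  have hj' : G.wmap l a (G.α j a) ∈ -G.pos (G.target l a) :=
    (G.mem_pos_or_mem_neg_pos (G.wmap_mem_root l (G.α_mem j a))).resolve_left hj
  have hall : ∀ n, G.wmap l a (G.α n a) ∈ -G.pos (G.target l a) := fun n => by
    rcases hN n with rfl | rfl
    exacts [hw, hj']
  exact hm.not_ge <|
    (Set.encard_mono (G.pos_subset_inversions hall)).trans (G.encard_inversions_le l a)

/-- (rank two) if `m < d = |R⁺_a|` and `w(α_{i,a}) ∈ −R⁺_b` then
`w(α_{j,a}) ∈ R⁺_b`. -/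
theorem stmt4 [Nonempty A] (G : GRS N A) (i j : N) (hij : i ≠ j)
    (hN : ∀ n : N, n = i ∨ n = j) (a : A) (l : List N)
    (hm : (l.length : ℕ∞) < (G.pos a).encard)
    (hw : G.wmap l a (G.α i a) ∈ -G.pos (G.target l a)) :
    G.wmap l a (G.α j a) ∈ G.pos (G.target l a) :=
  stmt4_general G i j hN a l hm hw
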